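/- There exists m₀ such that for all m ≥ m₀ and all integers k with 1 ≤ k and k < m^{1/3}, the function DISJ^m_k has a (1/10, ⌈(log₂ m)/8⌉)-hitting distribution over its 1-monochromatic rectangles. -/

import Mathlib

/-!
Sample `A ⊆ [m]` uniformly and take the rectangle `{a ⊆ A} × {b ⊆ Aᶜ}`, on which `DISJ` is `1`.
It meets `X × Y` as soon as `A` contains a member of `X` and `Aᶜ` a member of `Y`. For the first
event put `N(A) = #{a ∈ X | a ⊆ A}`; Cauchy–Schwarz gives
`Pr[N > 0] ≥ (E N)² / E N² = |X|² / ∑_{a,b ∈ X} 2^{|a ∩ b|}`, and since a fixed `k`-set rarely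
meets a random one, `∑_b 2^{|a ∩ b|} ≤ C(m,k) (1 + k/m)^k ≤ C(m,k) (1 + 2k²/m)`. So the event fails
with probability at most `ε` once `C(m,k) · 2k²/m ≤ ε |X|`, which for
`|X| ≥ 2^{-h} C(m,k) ≥ m^{-1/8} C(m,k) / 2` and `k < m^{1/3}` holds with `ε = 1/20`.
The second event is the first one for `Aᶜ`, and a union bound gives `1 - 1/10`.
-/

open Finset

/-- The probability, under a distribution `μ` on rectangles `R = R.1 × R.2 ⊆ α × β`,
that the sampled rectangle intersects `X × Y`. -/
noncomputable def hitProb {α β : Type*} [Fintype α] [Fintype β] [DecidableEq α] [DecidableEq β]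
    (μ : Finset α × Finset β → ℝ) (X : Finset α) (Y : Finset β) : ℝ :=
  ∑ R ∈ Finset.univ.filter
      (fun R : Finset α × Finset β => (R.1 ∩ X).Nonempty ∧ (R.2 ∩ Y).Nonempty), μ R

/-- `μ` is a probability distribution on rectangles of `α × β`. -/
def IsDistribution {α β : Type*} [Fintype α] [Fintype β]
    (μ : Finset α × Finset β → ℝ) : Prop :=
  (∀ R, 0 ≤ μ R) ∧ ∑ R, μ R = 1

/-- `μ` is a `(δ, h)`-hitting distribution: every `X × Y` with
`|X| ≥ 2^(−h)·|α|` and `|Y| ≥ 2^(−h)·|β|` is hit with probability at least `1 − δ`. -/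
def IsHitting {α β : Type*} [Fintype α] [Fintype β] [DecidableEq α] [DecidableEq β]
    (μ : Finset α × Finset β → ℝ) (δ : ℝ) (h : ℤ) : Prop :=
  ∀ X : Finset α, ∀ Y : Finset β,
    (2 : ℝ) ^ (-h) * (Fintype.card α : ℝ) ≤ X.card →
    (2 : ℝ) ^ (-h) * (Fintype.card β : ℝ) ≤ Y.card →
    1 - δ ≤ hitProb μ X Y

/-- The set of `k`-element subsets of `{1,…,m}`, the common domain of both inputs of
`DISJ^m_k`. -/
abbrev KSubset (m k : ℕ) := {s : Finset (Fin m) // s.card = k}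

lemma choose_sub_mul_pow_le {n k : ℕ} (hkn : k ≤ n) :
    ∀ {j : ℕ}, j ≤ k → (n - j).choose (k - j) * n ^ j ≤ n.choose k * k ^ j
  | 0, _ => by simp
  | j + 1, hj => by
    have ih := choose_sub_mul_pow_le hkn (j := j) (by omega)
    obtain ⟨p, hp⟩ : ∃ p, n - j = p + 1 := ⟨n - j - 1, by omega⟩
    obtain ⟨q, hq⟩ : ∃ q, k - j = q + 1 := ⟨k - j - 1, by omega⟩
    rw [hp, hq] at ih
    rw [show n - (j + 1) = p by omega, show k - (j + 1) = q by omega]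
    have pascal := Nat.add_one_mul_choose_eq p q
    have hratio : (q + 1) * n ≤ k * (p + 1) := by
      rw [← hp, ← hq, Nat.sub_mul, Nat.mul_sub]
      exact Nat.sub_le_sub_left (by nlinarith) _
    refine Nat.le_of_mul_le_mul_left ?_ (Nat.succ_pos p)
    calc (p + 1) * (p.choose q * n ^ (j + 1))
        = ((p + 1).choose (q + 1) * n ^ j) * ((q + 1) * n) := by rw [← mul_assoc, pascal]; ring
      _ ≤ (n.choose k * k ^ j) * (k * (p + 1)) := Nat.mul_le_mul ih hratio
      _ = (p + 1) * (n.choose k * k ^ (j + 1)) := by ring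

lemma choose_sub_le_choose_mul_pow {n k j : ℕ} (hkn : k ≤ n) (hjk : j ≤ k) :
    ((n - j).choose (k - j) : ℝ) ≤ n.choose k * (k / n) ^ j := by
  rcases Nat.eq_zero_or_pos n with rfl | hn
  · obtain rfl : j = 0 := by omega
    simp
  have hnj : (0 : ℝ) < (n : ℝ) ^ j := by positivity
  rw [div_pow, mul_div_assoc', le_div_iff₀ hnj]
  exact_mod_cast choose_sub_mul_pow_le hkn hjk

lemma one_add_pow_sub_one_le {x : ℝ} (hx : 0 ≤ x) {k : ℕ} (hkx : k * x ≤ 1) :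
    (1 + x) ^ k - 1 ≤ 2 * (k * x) := by
  have hexp : (1 + x) ^ k ≤ Real.exp (k * x) := by
    rw [Real.exp_nat_mul]
    gcongr
    linarith [Real.add_one_le_exp x]
  have hkx0 : 0 ≤ k * x := by positivity
  have := Real.abs_exp_sub_one_le (x := k * x) (by rwa [abs_of_nonneg hkx0])
  rw [abs_of_nonneg hkx0] at this
  linarith [le_abs_self (Real.exp (k * x) - 1)]

section Counting

variable {α : Type*} [DecidableEq α]

lemma two_pow_card_inter_eq_sum (a b : Finset α) :
    (2 : ℝ) ^ #(a ∩ b) = ∑ s ∈ a.powerset, if s ⊆ b then 1 else 0 := by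
  rw [sum_boole]
  norm_cast
  rw [← card_powerset]
  congr 1
  ext s
  simp only [mem_powerset, mem_filter, subset_inter_iff]

variable [Fintype α]

lemma card_filter_superset (s : Finset α) :
    #{A : Finset α | s ⊆ A} = 2 ^ (Fintype.card α - #s) := by
  rw [← card_univ, ← card_Icc_finset (subset_univ s)]
  congr 1
  ext A
  simp

lemma card_filter_compl (p : Finset α → Prop) [DecidablePred p] :
    #{A : Finset α | p Aᶜ} = #{A : Finset α | p A} :=
  card_nbij' compl compl (fun A hA => by simpa using hA) (fun A hA => by simpa using hA)
    (fun A _ => compl_compl A) (fun A _ => compl_compl A)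

lemma sum_two_pow_card_inter_le {k : ℕ} {a : Finset α} (ha : #a = k)
    (hk : k ≤ Fintype.card α) :
    ∑ b ∈ powersetCard k univ, (2 : ℝ) ^ #(a ∩ b) ≤
      ((Fintype.card α).choose k : ℝ) * (1 + k / Fintype.card α) ^ k := by
  calc ∑ b ∈ powersetCard k univ, (2 : ℝ) ^ #(a ∩ b)
      = ∑ s ∈ a.powerset, (#{b ∈ powersetCard k univ | s ⊆ b} : ℝ) := by
        simp_rw [two_pow_card_inter_eq_sum]
        rw [sum_comm]
        simp only [sum_boole]
    _ = ∑ s ∈ a.powerset, ((Fintype.card α - #s).choose (k - #s) : ℝ) := by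
        refine sum_congr rfl fun s hs => ?_
        rw [card_filter_powersetCard_subset s univ k (subset_univ s)
          (ha ▸ card_le_card (mem_powerset.1 hs)), card_univ]
    _ ≤ ∑ s ∈ a.powerset,
          ((Fintype.card α).choose k : ℝ) * ((k / Fintype.card α) ^ #s * 1 ^ (#a - #s)) := by
        gcongr with s hs
        rw [one_pow, mul_one]
        exact choose_sub_le_choose_mul_pow hk (ha ▸ card_le_card (mem_powerset.1 hs))
    _ = (Fintype.card α).choose k * (1 + k / Fintype.card α : ℝ) ^ k := by
        rw [← mul_sum, sum_pow_mul_eq_add_pow, ha, add_comm]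

lemma sum_two_pow_card_inter_sub_one_le {k : ℕ} {a : Finset α} (ha : #a = k)
    (hk : k ^ 2 ≤ Fintype.card α) :
    ∑ b ∈ powersetCard k univ, ((2 : ℝ) ^ #(a ∩ b) - 1) ≤
      ((Fintype.card α).choose k : ℝ) * (2 * k ^ 2 / Fintype.card α) := by
  have hkn : k ≤ Fintype.card α := (Nat.le_self_pow two_ne_zero k).trans hk
  have hkx : (k : ℝ) * (k / Fintype.card α) ≤ 1 := by
    rcases Nat.eq_zero_or_pos (Fintype.card α) with h0 | hn
    · simp [h0]
    rw [← mul_div_assoc, div_le_one (by positivity), ← sq]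
    exact_mod_cast hk
  rw [sum_sub_distrib, sum_const, card_powersetCard, card_univ, nsmul_one]
  calc ∑ b ∈ powersetCard k univ, (2 : ℝ) ^ #(a ∩ b) - (Fintype.card α).choose k
      ≤ (Fintype.card α).choose k * ((1 + k / Fintype.card α) ^ k - 1) := by
        linarith [sum_two_pow_card_inter_le ha hkn]
    _ ≤ (Fintype.card α).choose k * (2 * k ^ 2 / Fintype.card α) := by
        gcongr
        calc _ ≤ 2 * (k * (k / Fintype.card α : ℝ)) :=
              one_add_pow_sub_one_le (by positivity) hkx
          _ = _ := by ring

end Counting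

section SecondMoment

variable {α ι : Type*} [Fintype α] [DecidableEq α]

lemma sq_sum_two_pow_le_card_mul (X : Finset ι) (u : ι → Finset α) :
    (∑ i ∈ X, 2 ^ (Fintype.card α - #(u i))) ^ 2 ≤
      #{A : Finset α | ∃ i ∈ X, u i ⊆ A} *
        ∑ i ∈ X, ∑ j ∈ X, 2 ^ (Fintype.card α - #(u i ∪ u j)) := by
  set N : Finset α → ℕ := fun A => #{i ∈ X | u i ⊆ A} with hN
  have hfirst : ∑ A, N A = ∑ i ∈ X, 2 ^ (Fintype.card α - #(u i)) := by
    simp only [hN, card_filter]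
    rw [sum_comm]
    simp only [← card_filter, card_filter_superset]
  have hsecond :
      ∑ A, N A ^ 2 = ∑ i ∈ X, ∑ j ∈ X, 2 ^ (Fintype.card α - #(u i ∪ u j)) := by
    simp only [hN, card_filter, sq, sum_mul_sum, ite_zero_mul_ite_zero, mul_one,
      ← union_subset_iff]
    rw [sum_comm]
    refine sum_congr rfl fun i _ => ?_
    rw [sum_comm]
    simp only [← card_filter, card_filter_superset]
  have hsupport : ∑ A ∈ {A : Finset α | ∃ i ∈ X, u i ⊆ A}, N A = ∑ A, N A := by
    refine sum_subset (subset_univ _) fun A _ hA => ?_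
    simp only [mem_filter, mem_univ, true_and, not_exists, not_and] at hA
    simp only [hN, card_eq_zero, filter_eq_empty_iff]
    exact hA
  calc (∑ i ∈ X, 2 ^ (Fintype.card α - #(u i))) ^ 2
      = (∑ A ∈ {A : Finset α | ∃ i ∈ X, u i ⊆ A}, N A) ^ 2 := by rw [hsupport, hfirst]
    _ ≤ #{A : Finset α | ∃ i ∈ X, u i ⊆ A} *
          ∑ A ∈ {A : Finset α | ∃ i ∈ X, u i ⊆ A}, N A ^ 2 :=
        sq_sum_le_card_mul_sum_sq
    _ ≤ #{A : Finset α | ∃ i ∈ X, u i ⊆ A} * ∑ A, N A ^ 2 := by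
        gcongr
        exact subset_univ _
    _ = _ := by rw [hsecond]

end SecondMoment

section Uniform

variable {α : Type*} [Fintype α] [DecidableEq α] {k : ℕ}

lemma card_sq_mul_two_pow_le (X : Finset {s : Finset α // #s = k}) (hk : k ≤ Fintype.card α) :
    #X ^ 2 * 2 ^ Fintype.card α ≤
      #{A : Finset α | ∃ a ∈ X, a.1 ⊆ A} * ∑ a ∈ X, ∑ b ∈ X, 2 ^ #(a.1 ∩ b.1) := by
  have h := sq_sum_two_pow_le_card_mul X Subtype.val
  rw [sum_congr rfl fun a _ => by rw [a.2], sum_const, smul_eq_mul] at h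
  have hexp : ∀ a b : {s : Finset α // #s = k},
      2 ^ (Fintype.card α - #(a.1 ∪ b.1)) * 2 ^ (2 * k) =
        2 ^ #(a.1 ∩ b.1) * 2 ^ Fintype.card α := by
    intro a b
    have hunion := card_union_add_card_inter a.1 b.1
    have huniv := card_le_univ (a.1 ∪ b.1)
    rw [a.2, b.2] at hunion
    rw [← pow_add, ← pow_add]
    congr 1
    omega
  refine Nat.le_of_mul_le_mul_right ?_ (pow_pos two_pos (Fintype.card α))
  calc #X ^ 2 * 2 ^ Fintype.card α * 2 ^ Fintype.card α
      = (#X * 2 ^ (Fintype.card α - k)) ^ 2 * 2 ^ (2 * k) := by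
        rw [mul_pow, ← pow_mul, mul_assoc, mul_assoc, ← pow_add, ← pow_add]
        congr 2
        omega
    _ ≤ #{A : Finset α | ∃ a ∈ X, a.1 ⊆ A} *
          ∑ a ∈ X, ∑ b ∈ X, 2 ^ (Fintype.card α - #(a.1 ∪ b.1)) * 2 ^ (2 * k) := by
        simp only [← sum_mul, ← mul_assoc]
        gcongr
    _ = _ := by simp only [hexp, ← sum_mul, mul_assoc]

lemma sum_two_pow_card_inter_le_of_choose_le {X : Finset {s : Finset α // #s = k}}
    (hk : k ^ 2 ≤ Fintype.card α) {ε : ℝ}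
    (hε : ((Fintype.card α).choose k : ℝ) * (2 * k ^ 2 / Fintype.card α) ≤ ε * #X)
    (a : {s : Finset α // #s = k}) :
    ∑ b ∈ X, (2 : ℝ) ^ #(a.1 ∩ b.1) ≤ (1 + ε) * #X := by
  have hsub : ∑ b ∈ X, ((2 : ℝ) ^ #(a.1 ∩ b.1) - 1) ≤
      ∑ b ∈ powersetCard k univ, ((2 : ℝ) ^ #(a.1 ∩ b) - 1) := by
    rw [sum_subtype _ fun b => mem_powersetCard_univ]
    exact sum_le_univ_sum_of_nonneg fun b => sub_nonneg.2 (one_le_pow₀ one_le_two)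
  have := sum_two_pow_card_inter_sub_one_le a.2 hk
  rw [sum_sub_distrib, sum_const, nsmul_one] at hsub
  linarith

lemma one_sub_mul_two_pow_le_card_filter_exists_subset {X : Finset {s : Finset α // #s = k}}
    (hX : X.Nonempty) (hk : k ^ 2 ≤ Fintype.card α) {ε : ℝ}
    (hε : ((Fintype.card α).choose k : ℝ) * (2 * k ^ 2 / Fintype.card α) ≤ ε * #X) :
    (1 - ε) * 2 ^ Fintype.card α ≤ #{A : Finset α | ∃ a ∈ X, a.1 ⊆ A} := by
  set G : Finset (Finset α) := {A | ∃ a ∈ X, a.1 ⊆ A}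
  have hX0 : (0 : ℝ) < #X ^ 2 := by positivity
  have hmoment : (#X ^ 2 * 2 ^ Fintype.card α : ℝ) ≤ #G * ((1 + ε) * #X ^ 2) := by
    calc (#X ^ 2 * 2 ^ Fintype.card α : ℝ)
        ≤ #G * ∑ a ∈ X, ∑ b ∈ X, (2 : ℝ) ^ #(a.1 ∩ b.1) := by
          exact_mod_cast card_sq_mul_two_pow_le X ((Nat.le_self_pow two_ne_zero k).trans hk)
      _ ≤ #G * ∑ a ∈ X, (1 + ε) * (#X : ℝ) := by
          gcongr with a
          exact sum_two_pow_card_inter_le_of_choose_le hk hε a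
      _ = #G * ((1 + ε) * #X ^ 2) := by
          rw [sum_const, nsmul_eq_mul]
          ring
  have hcover : (2 : ℝ) ^ Fintype.card α ≤ #G * (1 + ε) := by nlinarith
  have hG : (0 : ℝ) ≤ #G := Nat.cast_nonneg _
  rcases le_or_gt ε 1 with hε1 | hε1
  · nlinarith [sq_nonneg ε]
  · nlinarith [(by positivity : (0 : ℝ) < 2 ^ Fintype.card α)]

end Uniform

section UniformPushforward

variable {Ω α β : Type*} [Fintype Ω] [DecidableEq α] [DecidableEq β]

noncomputable def uniformPushforward (f : Ω → Finset α × Finset β) (R : Finset α × Finset β) :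
    ℝ :=
  #{ω | f ω = R} / Fintype.card Ω

lemma isDistribution_uniformPushforward [Fintype α] [Fintype β] [Nonempty Ω]
    (f : Ω → Finset α × Finset β) :
    IsDistribution (uniformPushforward f) := by
  refine ⟨fun R => by unfold uniformPushforward; positivity, ?_⟩
  simp only [uniformPushforward]
  rw [← sum_div, ← Nat.cast_sum, sum_card_fiberwise_eq_card_filter, filter_true_of_mem
    fun _ _ => mem_univ _, card_univ, div_self (by positivity)]

lemma exists_eq_of_uniformPushforward_ne_zero {f : Ω → Finset α × Finset β}
    {R : Finset α × Finset β} (hR : uniformPushforward f R ≠ 0) : ∃ ω, f ω = R := by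
  by_contra! h
  simp [uniformPushforward, h] at hR

lemma hitProb_uniformPushforward [Fintype α] [Fintype β] (f : Ω → Finset α × Finset β)
    (X : Finset α) (Y : Finset β) :
    hitProb (uniformPushforward f) X Y =
      #{ω | ((f ω).1 ∩ X).Nonempty ∧ ((f ω).2 ∩ Y).Nonempty} / Fintype.card Ω := by
  simp only [hitProb, uniformPushforward]
  rw [← sum_div, ← Nat.cast_sum, sum_card_fiberwise_eq_card_filter]
  simp

end UniformPushforward

section SplitRectangle

variable {α : Type*} [Fintype α] [DecidableEq α]

def splitRectangle (k : ℕ) (A : Finset α) :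
    Finset {s : Finset α // #s = k} × Finset {s : Finset α // #s = k} :=
  (univ.filter fun a => a.1 ⊆ A, univ.filter fun b => b.1 ⊆ Aᶜ)

lemma inter_eq_empty_of_mem_splitRectangle {k : ℕ} {A : Finset α}
    {a b : {s : Finset α // #s = k}}
    (ha : a ∈ (splitRectangle k A).1) (hb : b ∈ (splitRectangle k A).2) : a.1 ∩ b.1 = ∅ := by
  simp only [splitRectangle, mem_filter, mem_univ, true_and] at ha hb
  exact disjoint_iff_inter_eq_empty.1 ((disjoint_compl_right (a := A)).mono ha hb)

lemma one_sub_two_mul_le_hitProb_splitRectangle {k : ℕ} {X Y : Finset {s : Finset α // #s = k}}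
    (hX : X.Nonempty) (hY : Y.Nonempty) (hk : k ^ 2 ≤ Fintype.card α) {ε : ℝ}
    (hεX : ((Fintype.card α).choose k : ℝ) * (2 * k ^ 2 / Fintype.card α) ≤ ε * #X)
    (hεY : ((Fintype.card α).choose k : ℝ) * (2 * k ^ 2 / Fintype.card α) ≤ ε * #Y) :
    1 - 2 * ε ≤ hitProb (uniformPushforward (splitRectangle k)) X Y := by
  set P : Finset (Finset α) := {A | ∃ a ∈ X, a.1 ⊆ A}
  set Q : Finset (Finset α) := {A | ∃ b ∈ Y, b.1 ⊆ Aᶜ}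
  have hevent : ({A | ((splitRectangle k A).1 ∩ X).Nonempty ∧
      ((splitRectangle k A).2 ∩ Y).Nonempty} : Finset (Finset α)) = P ∩ Q := by
    ext A
    simp only [P, Q, splitRectangle, Finset.Nonempty, mem_inter, mem_filter, mem_univ, true_and]
    exact and_congr (exists_congr fun _ => and_comm) (exists_congr fun _ => and_comm)
  have hP : (1 - ε) * 2 ^ Fintype.card α ≤ #P :=
    one_sub_mul_two_pow_le_card_filter_exists_subset hX hk hεX
  have hQ : (1 - ε) * 2 ^ Fintype.card α ≤ #Q := by
    rw [card_filter_compl fun A => ∃ b ∈ Y, b.1 ⊆ A]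
    exact one_sub_mul_two_pow_le_card_filter_exists_subset hY hk hεY
  have hunion : #P + #Q ≤ #(P ∩ Q) + 2 ^ Fintype.card α := by
    have := card_union_add_card_inter P Q
    have : #(P ∪ Q) ≤ 2 ^ Fintype.card α := by simpa using card_le_univ (P ∪ Q)
    omega
  rw [hitProb_uniformPushforward, hevent, Fintype.card_finset, le_div_iff₀ (by positivity)]
  have : (#P + #Q : ℝ) ≤ #(P ∩ Q) + 2 ^ Fintype.card α := by exact_mod_cast hunion
  push_cast
  linarith

end SplitRectangle

lemma inv_two_mul_le_two_zpow_neg_ceil_logb {x : ℝ} (hx : 0 < x) :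
    (2 * x)⁻¹ ≤ (2 : ℝ) ^ (-⌈Real.logb 2 x⌉) := by
  rw [← Real.rpow_intCast, Int.cast_neg]
  calc (2 * x)⁻¹ = (2 : ℝ) ^ (-(Real.logb 2 x + 1)) := by
        rw [Real.rpow_neg zero_le_two, Real.rpow_add_one two_ne_zero, Real.rpow_logb two_pos
          (by norm_num) hx, mul_comm]
    _ ≤ (2 : ℝ) ^ (-(⌈Real.logb 2 x⌉ : ℝ)) :=
        Real.rpow_le_rpow_of_exponent_le one_le_two
          (by linarith [Int.ceil_lt_add_one (Real.logb 2 x)])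

/-- Writing `m = t ^ 24` turns the exponents `1/3` and `1/8` of the statement into integer powers
of `t`. -/
lemma exists_pow_twentyfour_eq {m k : ℕ} (hm : 4 ^ 24 ≤ m)
    (hkm : (k : ℝ) < (m : ℝ) ^ ((1 : ℝ) / 3)) :
    ∃ t : ℝ, 4 ≤ t ∧ (m : ℝ) = t ^ 24 ∧ (k : ℝ) < t ^ 8 := by
  have hmt : (m : ℝ) = ((m : ℝ) ^ ((1 : ℝ) / 24)) ^ 24 := by
    rw [← Real.rpow_natCast, ← Real.rpow_mul (Nat.cast_nonneg m)]
    norm_num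
  refine ⟨(m : ℝ) ^ ((1 : ℝ) / 24), ?_, hmt, ?_⟩
  · exact le_of_pow_le_pow_left₀ (n := 24) (by norm_num) (by positivity)
      (by rw [← hmt]; exact_mod_cast hm)
  · rw [← Real.rpow_natCast, ← Real.rpow_mul (Nat.cast_nonneg m)]
    norm_num [hkm]

lemma nonempty_and_choose_mul_le_of_card_ge {m k : ℕ} {t : ℝ} (ht : 4 ≤ t)
    (hmt : (m : ℝ) = t ^ 24) (hkt : (k : ℝ) < t ^ 8) {Z : Finset (KSubset m k)}
    (hZ : (2 : ℝ) ^ (-⌈Real.logb 2 m / 8⌉) * Fintype.card (KSubset m k) ≤ #Z) :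
    Z.Nonempty ∧ ((Fintype.card (Fin m)).choose k : ℝ) * (2 * k ^ 2 / Fintype.card (Fin m)) ≤
      1 / 20 * #Z := by
  have ht0 : 0 < t := by linarith
  have hthreshold : (2 * t ^ 3)⁻¹ ≤ (2 : ℝ) ^ (-⌈Real.logb 2 m / 8⌉) := by
    rw [hmt, Real.logb_pow, show (24 : ℕ) * Real.logb 2 t / 8 = (3 : ℕ) * Real.logb 2 t by
      push_cast; ring, ← Real.logb_pow]
    exact inv_two_mul_le_two_zpow_neg_ceil_logb (by positivity)
  replace hZ := (mul_le_mul_of_nonneg_right hthreshold (Nat.cast_nonneg _)).trans hZ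
  rw [Fintype.card_finset_len, Fintype.card_fin] at hZ
  rw [Fintype.card_fin, hmt]
  have hkm : k ≤ m := by
    have : (k : ℝ) ≤ m := by
      rw [hmt]
      linarith [pow_le_pow_right₀ (by linarith : 1 ≤ t) (by norm_num : 8 ≤ 24)]
    exact_mod_cast this
  have hC : (0 : ℝ) < m.choose k := by exact_mod_cast Nat.choose_pos hkm
  have hZ0 : (0 : ℝ) < #Z := lt_of_lt_of_le (by positivity) hZ
  refine ⟨card_pos.1 (by exact_mod_cast hZ0), ?_⟩
  rw [inv_mul_le_iff₀ (by positivity)] at hZ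
  have hk2 : 2 * (k : ℝ) ^ 2 / t ^ 24 ≤ 2 / t ^ 8 := by
    rw [div_le_div_iff₀ (by positivity) (by positivity)]
    have : (k : ℝ) ^ 2 ≤ (t ^ 8) ^ 2 := pow_le_pow_left₀ (Nat.cast_nonneg k) hkt.le 2
    nlinarith [pow_pos ht0 8]
  have ht5 : (4 : ℝ) ^ 5 ≤ t ^ 5 := pow_le_pow_left₀ (by norm_num) ht 5
  calc (m.choose k : ℝ) * (2 * k ^ 2 / t ^ 24) ≤ (2 * t ^ 3 * #Z) * (2 / t ^ 8) := by gcongr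
    _ = 4 / t ^ 5 * #Z := by field_simp; ring
    _ ≤ 1 / 20 * #Z := by
        gcongr ?_ * _
        rw [div_le_div_iff₀ (by positivity) (by norm_num)]
        linarith

/-- There exists `m₀` such that for all `m ≥ m₀` and all integers `k`
with `1 ≤ k` and `k < m^(1/3)`, the function `DISJ^m_k` has a
`(1/10, ⌈(log₂ m)/8⌉)`-hitting distribution over its 1-monochromatic rectangles
(rectangles on which the two subsets are always disjoint). -/
theorem disjointness_one_hitting :
    ∃ m₀ : ℕ, ∀ m : ℕ, m₀ ≤ m → ∀ k : ℕ, 1 ≤ k → (k : ℝ) < (m : ℝ) ^ ((1 : ℝ) / 3) →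
      ∃ μ : Finset (KSubset m k) × Finset (KSubset m k) → ℝ,
        IsDistribution μ ∧
        (∀ R, μ R ≠ 0 → ∀ a ∈ R.1, ∀ b ∈ R.2, a.1 ∩ b.1 = ∅) ∧
        IsHitting μ (1 / 10) ⌈Real.logb 2 (m : ℝ) / 8⌉ := by
  refine ⟨4 ^ 24, fun m hm k _ hkm => ?_⟩
  obtain ⟨t, ht, hmt, hkt⟩ := exists_pow_twentyfour_eq hm hkm
  have hk2 : k ^ 2 ≤ Fintype.card (Fin m) := by
    have : (k : ℝ) ^ 2 ≤ m := by
      rw [hmt]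
      nlinarith [pow_le_pow_right₀ (by linarith : 1 ≤ t) (by norm_num : 16 ≤ 24)]
    rw [Fintype.card_fin]
    exact_mod_cast this
  refine ⟨uniformPushforward (splitRectangle k), isDistribution_uniformPushforward _,
    fun R hR a ha b hb => ?_, fun X Y hX hY => ?_⟩
  · obtain ⟨A, rfl⟩ := exists_eq_of_uniformPushforward_ne_zero hR
    exact inter_eq_empty_of_mem_splitRectangle ha hb
  · obtain ⟨hX₀, hεX⟩ := nonempty_and_choose_mul_le_of_card_ge ht hmt hkt hX
    obtain ⟨hY₀, hεY⟩ := nonempty_and_choose_mul_le_of_card_ge ht hmt hkt hY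
    linarith [one_sub_two_mul_le_hitProb_splitRectangle hX₀ hY₀ hk2 hεX hεY]
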